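/- arXiv:1708.02339 — 2 statements merged into one kernel-verified Lean document; each statement's English description precedes it below -/
import Mathlib

section
/- Fix real numbers a < 0 < b, let L : ℝ → ℝ be convex and continuous on the closed interval [a,b], let K ≥ 0, and let g : ℝ → ℝ be Lipschitz with constant K. For x ∈ ℝ and t > 0 define u(x,t) := min_{y ∈ [x − b·t, x − a·t]} ( t·L((x−y)/t) + g(y) ), and set C := max( |L(0)|, max_{z ∈ [a,b]} ( K·|z| − L(z) ) ). Then for every x ∈ ℝ and every t > 0 one has |u(x,t) − g(x)| ≤ C·t; in particular u(x,t) → g(x) as t → 0⁺. -/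
/-!
Every competitor `y` in the minimum is `y = x - t z` with `z ∈ [a, b]`. The competitor `y = x`
(`z = 0`, admissible since `a < 0 < b`) gives `u(x,t) ≤ g(x) + t L(0)`. For any competitor, the
Lipschitz bound `g(y) ≥ g(x) - K t |z|` gives `t L(z) + g(y) ≥ g(x) - t (K |z| - L(z))`, which is at
least `g(x) - C t`.
-/

open Set Filter Topology

noncomputable def hopfLax (a b : ℝ) (L g : ℝ → ℝ) (x t : ℝ) : ℝ :=
  sInf ((fun y => t * L ((x - y) / t) + g y) '' Icc (x - b * t) (x - a * t))

section HopfLax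

variable {a b K M t : ℝ} {L g : ℝ → ℝ}

lemma self_mem_Icc_sub_mul (ha : a ≤ 0) (hb : 0 ≤ b) (ht : 0 ≤ t) (x : ℝ) :
    x ∈ Icc (x - b * t) (x - a * t) :=
  ⟨sub_le_self x (mul_nonneg hb ht),
    (le_sub_self_iff x).2 (mul_nonpos_of_nonpos_of_nonneg ha ht)⟩

lemma div_mem_Icc_of_mem_Icc_sub_mul {x y : ℝ} (ht : 0 < t)
    (hy : y ∈ Icc (x - b * t) (x - a * t)) : (x - y) / t ∈ Icc a b :=
  ⟨(le_div_iff₀ ht).2 (by linarith [hy.2]), (div_le_iff₀ ht).2 (by linarith [hy.1])⟩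

lemma sub_mul_le_hopfLax_integrand (hM : ∀ z ∈ Icc a b, K * |z| - L z ≤ M)
    (hg : ∀ x y : ℝ, |g x - g y| ≤ K * |x - y|) (ht : 0 < t) {x y : ℝ}
    (hy : y ∈ Icc (x - b * t) (x - a * t)) :
    g x - M * t ≤ t * L ((x - y) / t) + g y := by
  set z := (x - y) / t with hz
  have hxy : x - y = t * z := by rw [hz]; field_simp
  have hg_xy : g x - g y ≤ K * (t * |z|) := by
    calc g x - g y ≤ |g x - g y| := le_abs_self _
      _ ≤ K * |x - y| := hg x y
      _ = K * (t * |z|) := by rw [hxy, abs_mul, abs_of_pos ht]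
  have hMz : t * (K * |z| - L z) ≤ t * M :=
    mul_le_mul_of_nonneg_left (hM z (div_mem_Icc_of_mem_Icc_sub_mul ht hy)) ht.le
  linarith

lemma sub_mul_le_hopfLax (ha : a ≤ 0) (hb : 0 ≤ b) (hM : ∀ z ∈ Icc a b, K * |z| - L z ≤ M)
    (hg : ∀ x y : ℝ, |g x - g y| ≤ K * |x - y|) (ht : 0 < t) (x : ℝ) :
    g x - M * t ≤ hopfLax a b L g x t :=
  le_csInf ((nonempty_of_mem (self_mem_Icc_sub_mul ha hb ht.le x)).image _)
    (forall_mem_image.2 fun _ hy => sub_mul_le_hopfLax_integrand hM hg ht hy)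

lemma hopfLax_le (ha : a ≤ 0) (hb : 0 ≤ b) (hM : ∀ z ∈ Icc a b, K * |z| - L z ≤ M)
    (hg : ∀ x y : ℝ, |g x - g y| ≤ K * |x - y|) (ht : 0 < t) (x : ℝ) :
    hopfLax a b L g x t ≤ t * L 0 + g x := by
  have hbdd : BddBelow ((fun y => t * L ((x - y) / t) + g y) '' Icc (x - b * t) (x - a * t)) :=
    ⟨g x - M * t, forall_mem_image.2 fun _ hy => sub_mul_le_hopfLax_integrand hM hg ht hy⟩
  simpa [hopfLax] using csInf_le hbdd (mem_image_of_mem _ (self_mem_Icc_sub_mul ha hb ht.le x))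

lemma abs_hopfLax_sub_le (ha : a ≤ 0) (hb : 0 ≤ b) (hM : ∀ z ∈ Icc a b, K * |z| - L z ≤ M)
    (hg : ∀ x y : ℝ, |g x - g y| ≤ K * |x - y|) (ht : 0 < t) (x : ℝ) :
    |hopfLax a b L g x t - g x| ≤ max |L 0| M * t := by
  have hlow := sub_mul_le_hopfLax ha hb hM hg ht x
  have hup := hopfLax_le ha hb hM hg ht x
  have hL0 : L 0 * t ≤ max |L 0| M * t :=
    mul_le_mul_of_nonneg_right ((le_abs_self _).trans (le_max_left _ _)) ht.le
  have hMt : M * t ≤ max |L 0| M * t := mul_le_mul_of_nonneg_right (le_max_right _ _) ht.le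
  rw [abs_sub_le_iff]
  constructor <;> linarith

end HopfLax

lemma tendsto_nhdsGT_of_abs_sub_le_mul {f : ℝ → ℝ} {c C : ℝ}
    (h : ∀ t > 0, |f t - c| ≤ C * t) : Tendsto f (𝓝[>] 0) (𝓝 c) := by
  have hC : Tendsto (fun t : ℝ => C * t) (𝓝[>] 0) (𝓝 0) :=
    tendsto_nhdsWithin_of_tendsto_nhds ((continuous_const.mul continuous_id).tendsto' 0 0 (by simp))
  rw [tendsto_iff_norm_sub_tendsto_zero]
  exact squeeze_zero' (Eventually.of_forall fun _ => norm_nonneg _)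
    (eventually_mem_nhdsWithin.mono h) hC

theorem stmt5_general (a b : ℝ) (ha : a < 0) (hb : 0 < b) (L : ℝ → ℝ)
    (hLcont : ContinuousOn L (Set.Icc a b))
    (K : ℝ) (g : ℝ → ℝ) (hg : ∀ x y : ℝ, |g x - g y| ≤ K * |x - y|) :
    let u : ℝ → ℝ → ℝ := fun x t =>
      sInf ((fun y => t * L ((x - y) / t) + g y) '' Set.Icc (x - b * t) (x - a * t))
    let C : ℝ := max |L 0| (sSup ((fun z => K * |z| - L z) '' Set.Icc a b))
    (∀ x : ℝ, ∀ t > (0 : ℝ), |u x t - g x| ≤ C * t) ∧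
    (∀ x : ℝ, Filter.Tendsto (fun t => u x t) (nhdsWithin 0 (Set.Ioi 0)) (nhds (g x))) := by
  intro u C
  have hbdd : BddAbove ((fun z => K * |z| - L z) '' Icc a b) :=
    isCompact_Icc.bddAbove_image ((continuous_const.mul continuous_abs).continuousOn.sub hLcont)
  have hM : ∀ z ∈ Icc a b, K * |z| - L z ≤ sSup ((fun z => K * |z| - L z) '' Icc a b) :=
    fun z hz => le_csSup hbdd (mem_image_of_mem _ hz)
  have hrate : ∀ x : ℝ, ∀ t > (0 : ℝ), |u x t - g x| ≤ C * t :=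
    fun x _ ht => abs_hopfLax_sub_le ha.le hb.le hM hg ht x
  exact ⟨hrate, fun x => tendsto_nhdsGT_of_abs_sub_le_mul (hrate x)⟩

/-- Lemma 3.4 (Lemma B): the Hopf–Lax function attains the initial condition:
`|u(x,t) - g(x)| ≤ C t`, hence `u(x,t) → g(x)` as `t → 0⁺`. -/
theorem stmt5 (a b : ℝ) (ha : a < 0) (hb : 0 < b) (L : ℝ → ℝ)
    (hLconv : ConvexOn ℝ (Set.Icc a b) L) (hLcont : ContinuousOn L (Set.Icc a b))
    (K : ℝ) (hK : 0 ≤ K) (g : ℝ → ℝ) (hg : ∀ x y : ℝ, |g x - g y| ≤ K * |x - y|) :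
    let u : ℝ → ℝ → ℝ := fun x t =>
      sInf ((fun y => t * L ((x - y) / t) + g y) '' Set.Icc (x - b * t) (x - a * t))
    let C : ℝ := max |L 0| (sSup ((fun z => K * |z| - L z) '' Set.Icc a b))
    (∀ x : ℝ, ∀ t > (0 : ℝ), |u x t - g x| ≤ C * t) ∧
    (∀ x : ℝ, Filter.Tendsto (fun t => u x t) (nhdsWithin 0 (Set.Ioi 0)) (nhds (g x))) :=
  stmt5_general a b ha hb L hLcont K g hg
end

section
/- Fix real numbers a < 0 < b, let L : ℝ → ℝ be convex and continuous on the closed interval [a,b], let g : ℝ → ℝ be differentiable, and fix t > 0 and x₀ ∈ ℝ. Suppose there is an open neighborhood U of x₀ and a function ŷ : U → ℝ such that for each x ∈ U, ŷ(x) is the unique minimizer of y ↦ t·L((x−y)/t) + g(y) over [x − b·t, x − a·t]. Suppose further that ŷ is differentiable at x₀, that ŷ(x₀) lies in the open interval (x₀ − b·t, x₀ − a·t), and that L is differentiable at q₀ := (x₀ − ŷ(x₀))/t. Then L'(q₀) = g'(ŷ(x₀)), and the function x ↦ u(x,t) := min_{y ∈ [x − b·t, x − a·t]} ( t·L((x−y)/t)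 + g(y) ) is differentiable at x₀ with ∂_x u(x₀,t) = g'(ŷ(x₀)). -/
/-!
At an interior minimizer `ŷ(x₀)` the first-order condition `L'(q₀) = g'(ŷ(x₀))` is just the
vanishing of the `y`-derivative of the cost. Near `x₀` the Hopf–Lax value is the cost evaluated
along `x ↦ ŷ(x)`, and by the chain rule its derivative is `L'(q₀) + (g'(ŷ(x₀)) - L'(q₀)) ŷ'(x₀)`;
the first-order condition kills the term through `ŷ'` (envelope theorem), leaving `g'(ŷ(x₀))`.
-/

open Set Filter Topology

noncomputable def hopfLaxCost (t : ℝ) (L g : ℝ → ℝ) (x y : ℝ) : ℝ := t * L ((x - y) / t) + g y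

theorem IsMinOn.csInf_image_eq {α β : Type*} [ConditionallyCompleteLinearOrder β]
    {f : α → β} {s : Set α} {a : α} (hf : IsMinOn f s a) (ha : a ∈ s) :
    sInf (f '' s) = f a :=
  IsLeast.csInf_eq ⟨mem_image_of_mem f ha, by rintro _ ⟨y, hy, rfl⟩; exact hf hy⟩

section HopfLaxCost

variable {t : ℝ} {L g : ℝ → ℝ} {ℓ m : ℝ}

theorem hasDerivAt_hopfLaxCost_right {x y : ℝ} (ht : t ≠ 0)
    (hL : HasDerivAt L ℓ ((x - y) / t)) (hg : HasDerivAt g m y) :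
    HasDerivAt (hopfLaxCost t L g x) (m - ℓ) y := by
  have hq : HasDerivAt (fun y => (x - y) / t) (-1 / t) y := by
    simpa using ((hasDerivAt_id y).const_sub x).div_const t
  have h : HasDerivAt (hopfLaxCost t L g x) (t * (ℓ * (-1 / t)) + m) y :=
    ((hL.comp y hq).const_mul t).add hg
  exact h.congr_deriv (by field_simp; ring)

theorem deriv_eq_of_isLocalMin_hopfLaxCost {x y : ℝ} (ht : t ≠ 0)
    (hmin : IsLocalMin (hopfLaxCost t L g x) y)
    (hL : HasDerivAt L ℓ ((x - y) / t)) (hg : HasDerivAt g m y) : ℓ = m :=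
  (sub_eq_zero.mp (hmin.hasDerivAt_eq_zero (hasDerivAt_hopfLaxCost_right ht hL hg))).symm

theorem hasDerivAt_hopfLaxCost_comp {Y : ℝ → ℝ} {Y' x₀ : ℝ} (ht : t ≠ 0)
    (hL : HasDerivAt L ℓ ((x₀ - Y x₀) / t)) (hg : HasDerivAt g m (Y x₀))
    (hY : HasDerivAt Y Y' x₀) :
    HasDerivAt (fun x => hopfLaxCost t L g x (Y x)) (ℓ + (m - ℓ) * Y') x₀ := by
  have hq : HasDerivAt (fun x => (x - Y x) / t) ((1 - Y') / t) x₀ :=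
    ((hasDerivAt_id x₀).sub hY).div_const t
  have h : HasDerivAt (fun x => hopfLaxCost t L g x (Y x)) (t * (ℓ * ((1 - Y') / t)) + m * Y') x₀ :=
    ((hL.comp x₀ hq).const_mul t).add (hg.comp x₀ hY)
  exact h.congr_deriv (by field_simp; ring)

theorem hasDerivAt_hopfLaxCost_comp_of_eq {Y : ℝ → ℝ} {x₀ : ℝ} (ht : t ≠ 0)
    (hL : HasDerivAt L ℓ ((x₀ - Y x₀) / t)) (hg : HasDerivAt g ℓ (Y x₀))
    (hY : DifferentiableAt ℝ Y x₀) :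
    HasDerivAt (fun x => hopfLaxCost t L g x (Y x)) ℓ x₀ := by
  simpa using hasDerivAt_hopfLaxCost_comp ht hL hg hY.hasDerivAt

end HopfLaxCost

theorem stmt14_general (a b : ℝ) (L : ℝ → ℝ)
    (g : ℝ → ℝ) (hg : Differentiable ℝ g) (t : ℝ) (ht : 0 < t) (x₀ : ℝ)
    (U : Set ℝ) (hU : U ∈ nhds x₀) (yhat : ℝ → ℝ)
    (hmem : ∀ x ∈ U, yhat x ∈ Set.Icc (x - b * t) (x - a * t))
    (hmin : ∀ x ∈ U, ∀ y ∈ Set.Icc (x - b * t) (x - a * t),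
      t * L ((x - yhat x) / t) + g (yhat x) ≤ t * L ((x - y) / t) + g y)
    (hydiff : DifferentiableAt ℝ yhat x₀)
    (hinterior : yhat x₀ ∈ Set.Ioo (x₀ - b * t) (x₀ - a * t))
    (hLdiff : DifferentiableAt ℝ L ((x₀ - yhat x₀) / t)) :
    deriv L ((x₀ - yhat x₀) / t) = deriv g (yhat x₀) ∧
    HasDerivAt
      (fun x => sInf ((fun y => t * L ((x - y) / t) + g y) ''
        Set.Icc (x - b * t) (x - a * t)))
      (deriv g (yhat x₀)) x₀ := by
  have hminOn : ∀ x ∈ U, IsMinOn (hopfLaxCost t L g x) (Icc (x - b * t) (x - a * t)) (yhat x) :=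
    fun x hx y hy => hmin x hx y hy
  have hlocal : IsLocalMin (hopfLaxCost t L g x₀) (yhat x₀) :=
    (hminOn x₀ (mem_of_mem_nhds hU)).isLocalMin
      (mem_of_superset (Ioo_mem_nhds hinterior.1 hinterior.2) Ioo_subset_Icc_self)
  have hfoc : deriv L ((x₀ - yhat x₀) / t) = deriv g (yhat x₀) :=
    deriv_eq_of_isLocalMin_hopfLaxCost ht.ne' hlocal hLdiff.hasDerivAt (hg _).hasDerivAt
  have hvalue : (fun x => sInf (hopfLaxCost t L g x '' Icc (x - b * t) (x - a * t)))
      =ᶠ[𝓝 x₀] fun x => hopfLaxCost t L g x (yhat x) := by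
    filter_upwards [hU] with x hx
    exact (hminOn x hx).csInf_image_eq (hmem x hx)
  refine ⟨hfoc, HasDerivAt.congr_of_eventuallyEq ?_ hvalue⟩
  exact hasDerivAt_hopfLaxCost_comp_of_eq ht.ne' (hfoc ▸ hLdiff.hasDerivAt) (hg _).hasDerivAt hydiff

/-- Lemma 4.2: when the Hopf–Lax minimizer `ŷ(x,t)` is unique (locally in `x`),
lies in the interior of the admissible interval, and `L` is differentiable at
`(x₀ - ŷ(x₀))/t`, the first-order condition `L'((x₀-ŷ)/t) = g'(ŷ)` holds and
`∂ₓ u(x₀,t) = g'(ŷ(x₀))`. -/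
theorem stmt14 (a b : ℝ) (ha : a < 0) (hb : 0 < b) (L : ℝ → ℝ)
    (hLconv : ConvexOn ℝ (Set.Icc a b) L) (hLcont : ContinuousOn L (Set.Icc a b))
    (g : ℝ → ℝ) (hg : Differentiable ℝ g) (t : ℝ) (ht : 0 < t) (x₀ : ℝ)
    (U : Set ℝ) (hU : U ∈ nhds x₀) (yhat : ℝ → ℝ)
    (hmem : ∀ x ∈ U, yhat x ∈ Set.Icc (x - b * t) (x - a * t))
    (hmin : ∀ x ∈ U, ∀ y ∈ Set.Icc (x - b * t) (x - a * t),
      t * L ((x - yhat x) / t) + g (yhat x) ≤ t * L ((x - y) / t) + g y)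
    (huniq : ∀ x ∈ U, ∀ y ∈ Set.Icc (x - b * t) (x - a * t),
      (∀ z ∈ Set.Icc (x - b * t) (x - a * t),
        t * L ((x - y) / t) + g y ≤ t * L ((x - z) / t) + g z) → y = yhat x)
    (hydiff : DifferentiableAt ℝ yhat x₀)
    (hinterior : yhat x₀ ∈ Set.Ioo (x₀ - b * t) (x₀ - a * t))
    (hLdiff : DifferentiableAt ℝ L ((x₀ - yhat x₀) / t)) :
    deriv L ((x₀ - yhat x₀) / t) = deriv g (yhat x₀) ∧
    HasDerivAt
      (fun x => sInf ((fun y => t * L ((x - y) / t) + g y) ''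
        Set.Icc (x - b * t) (x - a * t)))
      (deriv g (yhat x₀)) x₀ :=
  stmt14_general a b L g hg t ht x₀ U hU yhat hmem hmin hydiff hinterior hLdiff
end
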